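/- arXiv:2212.13962 — 4 statements merged into one kernel-verified Lean document; each statement's English description precedes it below -/
import Mathlib

section
/- Let G be a graph containing a pendant triangle (u, v, w), i.e., u, v, w are pairwise adjacent and deg(u) = deg(w) = 2. Then for every ℓ, G has an induced matching of size ℓ if and only if G − v has an induced matching of size ℓ. -/
variable {V : Type*}

/-- `M` is a matching in `G`: a finite set of edges of `G` that are pairwise non-incident. -/
def IsMatchingSet (G : SimpleGraph V) (M : Finset (Sym2 V)) : Prop :=
  (∀ e ∈ M, e ∈ G.edgeSet) ∧
  ∀ e ∈ M, ∀ f ∈ M, e ≠ f → ∀ v : V, v ∈ e → v ∉ f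

/-- `M` is an induced matching in `G`: a matching such that no edge of `G`
joins two distinct edges of `M`. -/
def IsInducedMatchingSet (G : SimpleGraph V) (M : Finset (Sym2 V)) : Prop :=
  IsMatchingSet G M ∧
  ∀ e ∈ M, ∀ f ∈ M, e ≠ f → ∀ a ∈ e, ∀ b ∈ f, ¬ G.Adj a b

/-- `S` is an independent set in `G`. -/
def IsIndepFinset (G : SimpleGraph V) (S : Finset V) : Prop :=
  ∀ a ∈ S, ∀ b ∈ S, ¬ G.Adj a b

/-- Maximum matching size `MM(G)`. -/
noncomputable def MMn (G : SimpleGraph V) : ℕ :=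
  sSup {n | ∃ M : Finset (Sym2 V), IsMatchingSet G M ∧ M.card = n}

/-- Maximum induced matching size `IM(G)`. -/
noncomputable def IMn (G : SimpleGraph V) : ℕ :=
  sSup {n | ∃ M : Finset (Sym2 V), IsInducedMatchingSet G M ∧ M.card = n}

/-- Maximum independent set size `IS(G)`. -/
noncomputable def ISn (G : SimpleGraph V) : ℕ :=
  sSup {n | ∃ S : Finset V, IsIndepFinset G S ∧ S.card = n}

/-! In a pendant triangle `(u, v, w)` the closed neighbourhood of the edge `uw` is `{u, v, w}`,
which lies in the closed neighbourhood of every edge through `v`. Hence in an induced matching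
the edge covering `v`, if any, can be exchanged for `uw`: the other matching edges stay away
from the closed neighbourhood of the removed edge, so they remain far from `uw`. This yields an
induced matching of the same size avoiding `v`, i.e. one of `G - v`. -/

open SimpleGraph Finset

section InducedSubgraph

variable {W : Type*}

lemma isInducedMatchingSet_map_iff {H : SimpleGraph W} {G : SimpleGraph V} (φ : H ↪g G)
    (M : Finset (Sym2 W)) :
    IsInducedMatchingSet G (M.map φ.toEmbedding.sym2Map) ↔ IsInducedMatchingSet H M := by
  have hinj : Function.Injective (Sym2.map φ) := Sym2.map.injective φ.injective
  simp only [IsInducedMatchingSet, IsMatchingSet, mem_map, Function.Embedding.sym2Map_apply,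
    RelEmbedding.coe_toEmbedding, forall_exists_index, and_imp, forall_apply_eq_imp_iff₂,
    Embedding.map_mem_edgeSet_iff, ne_eq, Sym2.mem_map, not_exists, not_and, hinj.eq_iff,
    EmbeddingLike.apply_eq_iff_eq, Embedding.map_adj_iff]
  grind

lemma exists_map_subtype_sym2Map_eq {s : Set V} {M : Finset (Sym2 V)}
    (hM : ∀ e ∈ M, ∀ x ∈ e, x ∈ s) :
    ∃ M' : Finset (Sym2 s), M'.map (Function.Embedding.subtype (· ∈ s)).sym2Map = M := by
  classical
  refine ⟨M.preimage (Sym2.map (↑)) (Sym2.map.injective Subtype.val_injective).injOn, ?_⟩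
  ext e
  simp only [mem_map, mem_preimage, Function.Embedding.sym2Map_apply,
    Function.Embedding.coe_subtype]
  refine ⟨fun ⟨e', he', hee'⟩ => hee' ▸ he', fun he => ⟨e.attachWith (hM e he), ?_, ?_⟩⟩
  · rwa [Sym2.attachWith_map_subtypeVal]
  · exact Sym2.attachWith_map_subtypeVal _

theorem exists_isInducedMatchingSet_induce_iff (G : SimpleGraph V) (s : Set V) (ℓ : ℕ) :
    (∃ M : Finset (Sym2 s), IsInducedMatchingSet (G.induce s) M ∧ #M = ℓ) ↔
      ∃ M : Finset (Sym2 V), IsInducedMatchingSet G M ∧ (∀ e ∈ M, ∀ x ∈ e, x ∈ s) ∧ #M = ℓ := by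
  constructor
  · rintro ⟨M, hM, rfl⟩
    refine ⟨M.map (Embedding.induce s).toEmbedding.sym2Map,
      (isInducedMatchingSet_map_iff _ M).2 hM, ?_, card_map _⟩
    simp +contextual
  · rintro ⟨M, hM, hMs, rfl⟩
    obtain ⟨M', rfl⟩ := exists_map_subtype_sym2Map_eq hMs
    exact ⟨M', (isInducedMatchingSet_map_iff (Embedding.induce s) M').1 hM, (card_map _).symm⟩

end InducedSubgraph

def SimpleGraph.edgeClosedNbhd (G : SimpleGraph V) (e : Sym2 V) : Set V :=
  {x | ∃ a ∈ e, a = x ∨ G.Adj a x}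

namespace IsInducedMatchingSet

variable {G : SimpleGraph V} {M : Finset (Sym2 V)} {e f g : Sym2 V}

lemma subset (hM : IsInducedMatchingSet G M) {M' : Finset (Sym2 V)} (hM' : M' ⊆ M) :
    IsInducedMatchingSet G M' :=
  ⟨⟨fun e he => hM.1.1 e (hM' he), fun e he f hf => hM.1.2 e (hM' he) f (hM' hf)⟩,
    fun e he f hf => hM.2 e (hM' he) f (hM' hf)⟩

lemma notMem_edgeClosedNbhd [DecidableEq V] (hM : IsInducedMatchingSet G M) (he : e ∈ M)
    (hg : g ∈ M.erase e) {x : V} (hx : x ∈ g) : x ∉ G.edgeClosedNbhd e := by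
  have hge := (ne_of_mem_erase hg).symm
  rintro ⟨a, ha, rfl | hax⟩
  · exact hM.1.2 e he g (mem_of_mem_erase hg) hge a ha hx
  · exact hM.2 e he g (mem_of_mem_erase hg) hge a ha x hx hax

lemma insert [DecidableEq V] (hM : IsInducedMatchingSet G M) (hf : f ∈ G.edgeSet)
    (hfar : ∀ g ∈ M, ∀ x ∈ g, x ∉ G.edgeClosedNbhd f) : IsInducedMatchingSet G (insert f M) := by
  refine ⟨⟨forall_mem_insert _ _ _ |>.2 ⟨hf, hM.1.1⟩, ?_⟩, ?_⟩
  · intro g hg h hh hgh x hxg hxh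
    rcases mem_insert.1 hg with rfl | hgM <;> rcases mem_insert.1 hh with rfl | hhM
    · exact hgh rfl
    · exact hfar h hhM x hxh ⟨x, hxg, .inl rfl⟩
    · exact hfar g hgM x hxg ⟨x, hxh, .inl rfl⟩
    · exact hM.1.2 g hgM h hhM hgh x hxg hxh
  · intro g hg h hh hgh a ha b hb hab
    rcases mem_insert.1 hg with rfl | hgM <;> rcases mem_insert.1 hh with rfl | hhM
    · exact hgh rfl
    · exact hfar h hhM b hb ⟨a, ha, .inr hab⟩
    · exact hfar g hgM a ha ⟨b, hb, .inr hab.symm⟩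
    · exact hM.2 g hgM h hhM hgh a ha b hb hab

lemma insert_erase [DecidableEq V] (hM : IsInducedMatchingSet G M) (he : e ∈ M)
    (hf : f ∈ G.edgeSet) (hfe : G.edgeClosedNbhd f ⊆ G.edgeClosedNbhd e) :
    IsInducedMatchingSet G (Insert.insert f (M.erase e)) :=
  (hM.subset (erase_subset e M)).insert hf
    fun _ hg _ hx hxf => hM.notMem_edgeClosedNbhd he hg hx (hfe hxf)

lemma card_insert_erase [DecidableEq V] (hM : IsInducedMatchingSet G M) (he : e ∈ M)
    (hfe : G.edgeClosedNbhd f ⊆ G.edgeClosedNbhd e) : #(Insert.insert f (M.erase e)) = #M := by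
  have hfM : f ∉ M.erase e := fun hf =>
    hM.notMem_edgeClosedNbhd he hf f.out_fst_mem (hfe ⟨_, f.out_fst_mem, .inl rfl⟩)
  rw [card_insert_of_notMem hfM, card_erase_add_one he]

end IsInducedMatchingSet

lemma edgeClosedNbhd_subset_of_pendant {G : SimpleGraph V} {u v w : V} {e : Sym2 V}
    (huv : G.Adj u v) (hvw : G.Adj v w) (hu : G.neighborSet u = {v, w})
    (hw : G.neighborSet w = {u, v}) (hve : v ∈ e) :
    G.edgeClosedNbhd s(u, w) ⊆ G.edgeClosedNbhd e := by
  have hx : ∀ x ∈ G.edgeClosedNbhd s(u, w), x = u ∨ x = v ∨ x = w := by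
    rintro x ⟨a, ha, rfl | hax⟩
    · rcases Sym2.mem_iff.1 ha with rfl | rfl <;> simp
    · rcases Sym2.mem_iff.1 ha with rfl | rfl
      · rw [← mem_neighborSet, hu] at hax
        rcases hax with rfl | rfl <;> simp
      · rw [← mem_neighborSet, hw] at hax
        rcases hax with rfl | rfl <;> simp
  intro x hxf
  rcases hx x hxf with rfl | rfl | rfl
  · exact ⟨v, hve, .inr huv.symm⟩
  · exact ⟨x, hve, .inl rfl⟩
  · exact ⟨v, hve, .inr hvw⟩

theorem stmt_4_general {V : Type*} (G : SimpleGraph V) (u v w : V)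
    (huv : G.Adj u v) (hvw : G.Adj v w) (huw : G.Adj u w)
    (hu : G.neighborSet u = {v, w}) (hw : G.neighborSet w = {u, v}) (ℓ : ℕ) :
    (∃ M : Finset (Sym2 V), IsInducedMatchingSet G M ∧ M.card = ℓ) ↔
    (∃ M : Finset (Sym2 ({x : V | x ≠ v} : Set V)),
      IsInducedMatchingSet (G.induce {x : V | x ≠ v}) M ∧ M.card = ℓ) := by
  classical
  rw [exists_isInducedMatchingSet_induce_iff]
  refine ⟨fun ⟨M, hM, hcard⟩ => ?_, fun ⟨M, hM, _, hcard⟩ => ⟨M, hM, hcard⟩⟩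
  by_cases hv : ∃ e ∈ M, v ∈ e
  · obtain ⟨e, he, hve⟩ := hv
    have hfe := edgeClosedNbhd_subset_of_pendant huv hvw hu hw hve
    refine ⟨insert s(u, w) (M.erase e), hM.insert_erase he (G.mem_edgeSet.2 huw) hfe, ?_,
      hcard ▸ hM.card_insert_erase he hfe⟩
    intro g hg x hx hxv
    rcases mem_insert.1 hg with rfl | hg
    · rcases Sym2.mem_iff.1 hx with rfl | rfl
      exacts [huv.ne hxv, hvw.ne hxv.symm]
    · exact hM.notMem_edgeClosedNbhd he hg hx (hxv ▸ ⟨v, hve, .inl rfl⟩)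
  · push Not at hv
    exact ⟨M, hM, fun e he x hx hxv => hv e he (hxv ▸ hx), hcard⟩

/-- Reduction rule for a pendant triangle `(u, v, w)`: deleting `v` preserves the
existence of an induced matching of size `ℓ`. -/
theorem stmt_4 {V : Type*} [Fintype V] (G : SimpleGraph V) (u v w : V)
    (huv : G.Adj u v) (hvw : G.Adj v w) (huw : G.Adj u w)
    (hu : G.neighborSet u = {v, w}) (hw : G.neighborSet w = {u, v}) (ℓ : ℕ) :
    (∃ M : Finset (Sym2 V), IsInducedMatchingSet G M ∧ M.card = ℓ) ↔
    (∃ M : Finset (Sym2 ({x : V | x ≠ v} : Set V)),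
      IsInducedMatchingSet (G.induce {x : V | x ≠ v}) M ∧ M.card = ℓ) :=
  stmt_4_general G u v w huv hvw huw hu hw ℓ
end

section
/- Let H be a factor-critical graph that is not a triangle star, and let v be any vertex of H. Then H − v contains a vertex of degree at least two. -/
variable {V : Type*}

/-- `G` is factor-critical: for every vertex `x`, `G - x` has a perfect matching. -/
def FactorCritical (G : SimpleGraph V) : Prop :=
  ∀ x : V, ∃ M : Finset (Sym2 ({y : V | y ≠ x} : Set V)),
    IsMatchingSet (G.induce {y : V | y ≠ x}) M ∧
    ∀ z : ({y : V | y ≠ x} : Set V), ∃ e ∈ M, z ∈ e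

/-- `H` is a triangle star: there is a center `s` adjacent to all other vertices,
and the remaining vertices are partitioned into adjacent pairs (each pair forming
a pendant triangle with `s`), with no other edges. -/
def IsTriangleStar (H : SimpleGraph V) : Prop :=
  ∃ s : V, ∃ p : V → V,
    (∀ x : V, x ≠ s → p x ≠ x ∧ p x ≠ s ∧ p (p x) = x) ∧
    (∀ a b : V, H.Adj a b ↔ (a ≠ b ∧ (a = s ∨ b = s ∨ p a = b)))

private lemma neighbor_of_mem_edge {W : Type*} {G : SimpleGraph W} {e : Sym2 W}
    (he : e ∈ G.edgeSet) {z : W} (hz : z ∈ e) : ∃ w, G.Adj z w := by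
  induction e with
  | h a b =>
    rw [Sym2.mem_iff] at hz
    rw [SimpleGraph.mem_edgeSet] at he
    rcases hz with rfl | rfl
    · exact ⟨b, he⟩
    · exact ⟨a, he.symm⟩

/-- If `H` is factor-critical and not a triangle star, then for any vertex `v`,
`H - v` has a vertex of degree at least two. -/
theorem stmt_11 {V : Type*} [Fintype V] (H : SimpleGraph V)
    (hfc : FactorCritical H) (hts : ¬ IsTriangleStar H) (v : V) :
    ∃ x a b : ({y : V | y ≠ v} : Set V), a ≠ b ∧
      (H.induce {y : V | y ≠ v}).Adj x a ∧ (H.induce {y : V | y ≠ v}).Adj x b := by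
  classical
  by_contra hcon
  push_neg at hcon
  apply hts
  have hex : ∀ x : V, x ≠ v → ∃ w : V, w ≠ v ∧ H.Adj x w := by
    obtain ⟨M, ⟨hMe, _⟩, hMc⟩ := hfc v
    intro x hx
    obtain ⟨e, heM, hxe⟩ := hMc ⟨x, hx⟩
    obtain ⟨w, hw⟩ := neighbor_of_mem_edge (hMe e heM) hxe
    exact ⟨w.val, w.prop, hw⟩
  have huniq : ∀ x : V, x ≠ v → ∀ w₁ w₂ : V, w₁ ≠ v → w₂ ≠ v →
      H.Adj x w₁ → H.Adj x w₂ → w₁ = w₂ := by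
    intro x hx w₁ w₂ h1 h2 ha1 ha2
    by_contra hne
    exact hcon ⟨x, hx⟩ ⟨w₁, h1⟩ ⟨w₂, h2⟩ (by simp [Subtype.ext_iff, hne]) ha1 ha2
  set p : V → V := fun x => if hx : x ≠ v then (hex x hx).choose else v with hpdef
  have hp1 : ∀ x, x ≠ v → p x ≠ v := by
    intro x hx; simp only [hpdef, dif_pos hx]; exact (hex x hx).choose_spec.1
  have hp2 : ∀ x, x ≠ v → H.Adj x (p x) := by
    intro x hx; simp only [hpdef, dif_pos hx]; exact (hex x hx).choose_spec.2
  have hp3 : ∀ x, x ≠ v → p x ≠ x := fun x hx h => H.irrefl (h ▸ hp2 x hx)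
  have hp4 : ∀ x, x ≠ v → p (p x) = x := fun x hx =>
    huniq (p x) (hp1 x hx) (p (p x)) x (hp1 _ (hp1 x hx)) hx
      (hp2 _ (hp1 x hx)) (hp2 x hx).symm
  have hv' : ∀ x, x ≠ v → H.Adj (p x) v := by
    intro x hx
    obtain ⟨M, ⟨hMe, _⟩, hMc⟩ := hfc x
    obtain ⟨e, heM, hxe⟩ := hMc ⟨p x, hp3 x hx⟩
    obtain ⟨w, hw⟩ := neighbor_of_mem_edge (hMe e heM) hxe
    by_cases hwv : w.val = v
    · exact hwv ▸ hw
    · exact absurd (huniq (p x) (hp1 x hx) w.val x hwv hx hw (hp2 x hx).symm) w.prop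
  have hv : ∀ x, x ≠ v → H.Adj x v := by
    intro x hx
    have h := hv' (p x) (hp1 x hx)
    rwa [hp4 x hx] at h
  refine ⟨v, p, fun x hx => ⟨hp3 x hx, hp1 x hx, hp4 x hx⟩, fun a b => ?_⟩
  constructor
  · intro hab
    refine ⟨hab.ne, ?_⟩
    by_cases ha : a = v
    · exact Or.inl ha
    by_cases hb : b = v
    · exact Or.inr (Or.inl hb)
    · exact Or.inr (Or.inr (huniq a ha (p a) b (hp1 a ha) hb (hp2 a ha) hab))
  · rintro ⟨hne, rfl | rfl | h⟩
    · exact (hv b hne.symm).symm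
    · exact hv a hne
    · have ha : a ≠ v := by
        rintro rfl
        rw [hpdef] at h
        simp only [ne_eq, not_true_eq_false, dite_false] at h
        exact hne h
      exact h ▸ hp2 a ha
end

section
/- Let G be obtained from a connected bipartite graph G' with bipartition U ∪ W by attaching n_u ≥ 1 pendant vertices to each u ∈ U and n_w ≥ 0 pendant triangles to each w ∈ W. Then MM(G) = IM(G) = |U| + Σ_{w∈W} n_w and IS(G) = Σ_{u∈U} n_u + Σ_{w∈W} max(n_w, 1). -/
variable {V : Type*}

/-- Vertex type of the Cameron–Walker construction: the original vertices,
the pendant vertices (`nP x` of them attached to `x`), and the pendant-triangle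
vertices (`2 · nT x` of them attached to `x`, in pairs indexed by `ℕ × Bool`). -/
def AugV (V' : Type*) (nP nT : V' → ℕ) : Type _ :=
  V' ⊕ ({p : V' × ℕ // p.2 < nP p.1} ⊕ {q : V' × ℕ × Bool // q.2.1 < nT q.1})

/-- Base adjacency relation of the Cameron–Walker construction. -/
def AugAdj {V' : Type*} (G' : SimpleGraph V') (nP nT : V' → ℕ) :
    AugV V' nP nT → AugV V' nP nT → Prop
  | Sum.inl a, Sum.inl b => G'.Adj a b
  | Sum.inl a, Sum.inr (Sum.inl p) => p.1.1 = a
  | Sum.inl a, Sum.inr (Sum.inr q) => q.1.1 = a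
  | Sum.inr (Sum.inr q), Sum.inr (Sum.inr q') => q.1.1 = q'.1.1 ∧ q.1.2.1 = q'.1.2.1
  | _, _ => False

/-- The graph obtained from `G'` by attaching `nP x` pendant vertices and
`nT x` pendant triangles to each vertex `x`. -/
def AugGraph {V' : Type*} (G' : SimpleGraph V') (nP nT : V' → ℕ) :
    SimpleGraph (AugV V' nP nT) :=
  SimpleGraph.fromRel (AugAdj G' nP nT)

/-! Every edge of `G` lies in a star centred at some `u ∈ U` (`u` with its pendant vertices) or in
one of the pendant triangles, and any two edges of the same star or triangle meet. So a matching
has at most `|U| + Σ n_w` edges, and one pendant edge at each `u` together with one edge from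
each triangle is an induced matching of that size.

Dually, the vertex set splits into `Σ n_u + Σ max(n_w, 1)` cliques: `u` with its first pendant,
each further pendant alone, `w` with its first triangle (or alone if it has none), each further
triangle without `w`. So an independent set has at most that many vertices, and all pendants,
one non-`w` vertex of each triangle and the `w` without triangles form one. -/

-- `AugV` is a type synonym for a sum type; this lets the `Sum` API act on its vertices.
attribute [reducible] AugV

open Finset

section Blocks

variable {T : Type*} {G : SimpleGraph V}

theorem IsMatchingSet.card_le_of_blocks {M : Finset (Sym2 V)} (hM : IsMatchingSet G M)
    (k : V → T) (B : Finset T) (hcover : ∀ a b, G.Adj a b → k a ∈ B ∨ k b ∈ B)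
    (hmeet : ∀ a a' b b', G.Adj a a' → G.Adj b b' → k a = k b →
      ∃ v, v ∈ s(a, a') ∧ v ∈ s(b, b')) :
    #M ≤ #B := by
  classical
  have hkey : ∀ e ∈ M, ∃ t ∈ B, ∃ v ∈ e, k v = t := by
    intro e he
    induction e using Sym2.ind with
    | _ a b =>
      rcases hcover a b (hM.1 _ he) with ha | hb
      · exact ⟨_, ha, a, Sym2.mem_mk_left a b, rfl⟩
      · exact ⟨_, hb, b, Sym2.mem_mk_right a b, rfl⟩
  have hfiber : ∀ t ∈ B, #{e ∈ M | ∃ v ∈ e, k v = t} ≤ 1 := by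
    refine fun t _ => card_le_one.mpr fun e he f hf => ?_
    simp only [mem_filter] at he hf
    obtain ⟨he, a, hae, rfl⟩ := he
    obtain ⟨hf, b, hbf, hab⟩ := hf
    obtain ⟨a', rfl⟩ := Sym2.mem_iff_exists.mp hae
    obtain ⟨b', rfl⟩ := Sym2.mem_iff_exists.mp hbf
    obtain ⟨v, hve, hvf⟩ := hmeet a a' b b' (hM.1 _ he) (hM.1 _ hf) hab.symm
    by_contra hne
    exact hM.2 _ he _ hf hne v hve hvf
  calc #M ≤ #(B.biUnion fun t => {e ∈ M | ∃ v ∈ e, k v = t}) := by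
        refine card_le_card fun e he => ?_
        obtain ⟨t, ht, hv⟩ := hkey e he
        exact mem_biUnion.mpr ⟨t, ht, mem_filter.mpr ⟨he, hv⟩⟩
    _ ≤ #B * 1 := card_biUnion_le_card_mul _ _ _ hfiber
    _ = #B := mul_one _

theorem exists_isInducedMatchingSet_card_eq (k : V → T) (B : Finset T)
    (hsurj : ∀ t ∈ B, ∃ a b, G.Adj a b ∧ k a = t ∧ k b = t)
    (hsep : ∀ a b, G.Adj a b → k a ∈ B → k b ∈ B → k a = k b) :
    ∃ M, IsInducedMatchingSet G M ∧ #M = #B := by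
  classical
  choose a b hadj ha hb using hsurj
  let edge : B → Sym2 V := fun t => s(a t.1 t.2, b t.1 t.2)
  have hkey : ∀ t : B, ∀ v ∈ edge t, k v = t := by
    rintro ⟨t, ht⟩ v hv
    rcases Sym2.mem_iff.mp hv with rfl | rfl
    exacts [ha t ht, hb t ht]
  have hinj : Function.Injective edge := fun t t' h => Subtype.ext <|
    (hkey t _ (Sym2.mem_mk_left _ _)).symm.trans (hkey t' _ (h ▸ Sym2.mem_mk_left _ _))
  refine ⟨B.attach.image edge, ⟨⟨?_, ?_⟩, ?_⟩, ?_⟩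
  · simp only [mem_image, mem_attach, true_and, forall_exists_index]
    rintro _ ⟨t, ht⟩ rfl
    exact hadj t ht
  · simp only [mem_image, mem_attach, true_and, forall_exists_index]
    rintro _ t rfl _ t' rfl h v hv hv'
    exact h (congrArg edge (Subtype.ext ((hkey t v hv).symm.trans (hkey t' v hv'))))
  · simp only [mem_image, mem_attach, true_and, forall_exists_index]
    rintro _ t rfl _ t' rfl h v hv w hw hvw
    refine h (congrArg edge (Subtype.ext ?_))
    rw [← hkey t v hv, ← hkey t' w hw]
    exact hsep v w hvw (hkey t v hv ▸ t.2) (hkey t' w hw ▸ t'.2)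
  · rw [card_image_of_injective _ hinj, card_attach]

theorem IsIndepFinset.card_le_of_blocks {S : Finset V} (hS : IsIndepFinset G S) (k : V → T)
    (B : Finset T) (hmaps : ∀ v, k v ∈ B)
    (hclique : ∀ a b, a ≠ b → k a = k b → G.Adj a b) :
    #S ≤ #B :=
  card_le_card_of_injOn k (fun v _ => hmaps v) fun a ha b hb hab =>
    by_contra fun hne => hS a ha b hb (hclique a b hne hab)

theorem exists_isIndepFinset_card_eq (k : V → T) (B : Finset T) (P : V → Prop)
    (hP : ∀ a b, P a → P b → ¬ G.Adj a b) (hsurj : ∀ t ∈ B, ∃ v, P v ∧ k v = t) :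
    ∃ S, IsIndepFinset G S ∧ #S = #B := by
  classical
  choose v hv hkv using hsurj
  refine ⟨B.attach.image fun t => v t.1 t.2, ?_, ?_⟩
  · simp only [IsIndepFinset, mem_image, mem_attach, true_and, forall_exists_index]
    rintro _ ⟨t, ht⟩ rfl _ ⟨t', ht'⟩ rfl
    exact hP _ _ (hv t ht) (hv t' ht')
  · refine (card_image_of_injective _ fun t t' h => Subtype.ext ?_).trans card_attach
    simpa [hkv] using congrArg k h

theorem MMn_eq_card_and_IMn_eq_card_of_blocks (k : V → T) (B : Finset T)
    (hcover : ∀ a b, G.Adj a b → k a ∈ B ∨ k b ∈ B)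
    (hmeet : ∀ a a' b b', G.Adj a a' → G.Adj b b' → k a = k b →
      ∃ v, v ∈ s(a, a') ∧ v ∈ s(b, b'))
    (hsurj : ∀ t ∈ B, ∃ a b, G.Adj a b ∧ k a = t ∧ k b = t)
    (hsep : ∀ a b, G.Adj a b → k a ∈ B → k b ∈ B → k a = k b) :
    MMn G = #B ∧ IMn G = #B := by
  obtain ⟨M, hM, hcard⟩ := exists_isInducedMatchingSet_card_eq k B hsurj hsep
  have hle (M' : Finset (Sym2 V)) (hM' : IsMatchingSet G M') : #M' ≤ #B :=
    hM'.card_le_of_blocks k B hcover hmeet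
  refine ⟨IsGreatest.csSup_eq ⟨⟨M, hM.1, hcard⟩, ?_⟩, IsGreatest.csSup_eq ⟨⟨M, hM, hcard⟩, ?_⟩⟩
  · rintro _ ⟨M', hM', rfl⟩
    exact hle M' hM'
  · rintro _ ⟨M', hM', rfl⟩
    exact hle M' hM'.1

theorem ISn_eq_card_of_blocks (k : V → T) (B : Finset T) (hmaps : ∀ v, k v ∈ B)
    (hclique : ∀ a b, a ≠ b → k a = k b → G.Adj a b) (P : V → Prop)
    (hP : ∀ a b, P a → P b → ¬ G.Adj a b) (hsurj : ∀ t ∈ B, ∃ v, P v ∧ k v = t) :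
    ISn G = #B := by
  obtain ⟨S, hS, hcard⟩ := exists_isIndepFinset_card_eq k B P hP hsurj
  exact IsGreatest.csSup_eq ⟨⟨S, hS, hcard⟩,
    by rintro _ ⟨S', hS', rfl⟩; exact hS'.card_le_of_blocks k B hmaps hclique⟩

end Blocks

namespace AugGraph

variable {V' : Type*} {G' : SimpleGraph V'} {nP nT : V' → ℕ} {x y : V'}
  {p p' : {p : V' × ℕ // p.2 < nP p.1}} {q q' : {q : V' × ℕ × Bool // q.2.1 < nT q.1}}
  {U W : Finset V'} {a a' b b' : AugV V' nP nT}

lemma adj_iff : (AugGraph G' nP nT).Adj a b ↔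
    a ≠ b ∧ (AugAdj G' nP nT a b ∨ AugAdj G' nP nT b a) :=
  Iff.rfl

@[simp] lemma adj_inl_inl : (AugGraph G' nP nT).Adj (.inl x) (.inl y) ↔ G'.Adj x y := by
  simp [adj_iff, AugAdj, G'.adj_comm y x]
  exact fun h => h.ne

@[simp] lemma adj_inl_pend : (AugGraph G' nP nT).Adj (.inl x) (.inr (.inl p)) ↔ p.1.1 = x := by
  simp [adj_iff, AugAdj]

@[simp] lemma adj_pend_inl : (AugGraph G' nP nT).Adj (.inr (.inl p)) (.inl x) ↔ p.1.1 = x := by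
  simp [adj_iff, AugAdj]

@[simp] lemma adj_inl_tri : (AugGraph G' nP nT).Adj (.inl x) (.inr (.inr q)) ↔ q.1.1 = x := by
  simp [adj_iff, AugAdj]

@[simp] lemma adj_tri_inl : (AugGraph G' nP nT).Adj (.inr (.inr q)) (.inl x) ↔ q.1.1 = x := by
  simp [adj_iff, AugAdj]

@[simp] lemma not_adj_pend_pend :
    ¬ (AugGraph G' nP nT).Adj (.inr (.inl p)) (.inr (.inl p')) := by
  simp [adj_iff, AugAdj]

@[simp] lemma not_adj_pend_tri :
    ¬ (AugGraph G' nP nT).Adj (.inr (.inl p)) (.inr (.inr q)) := by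
  simp [adj_iff, AugAdj]

@[simp] lemma not_adj_tri_pend :
    ¬ (AugGraph G' nP nT).Adj (.inr (.inr q)) (.inr (.inl p)) := by
  simp [adj_iff, AugAdj]

@[simp] lemma adj_tri_tri : (AugGraph G' nP nT).Adj (.inr (.inr q)) (.inr (.inr q')) ↔
    q.1.1 = q'.1.1 ∧ q.1.2.1 = q'.1.2.1 ∧ q.1.2.2 ≠ q'.1.2.2 := by
  obtain ⟨⟨w, i, b⟩, hq⟩ := q
  obtain ⟨⟨w', i', b'⟩, hq'⟩ := q'
  simp only [adj_iff, AugAdj, ne_eq, Sum.inr.injEq, Subtype.mk.injEq, Prod.mk.injEq]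
  grind

/- `matchingBlock v` is the star `inl u` or the pendant triangle `inr ⟨w, i⟩` containing `v`.
`cliqueBlock v = ⟨x, i⟩` is the clique formed by the `i`-th pendant vertex or pendant triangle
of `x`, where the base vertex `x` itself joins `i = 0`. -/
def matchingBlock : AugV V' nP nT → V' ⊕ (Σ _ : V', ℕ)
  | .inl x => .inl x
  | .inr (.inl p) => .inl p.1.1
  | .inr (.inr q) => .inr ⟨q.1.1, q.1.2.1⟩

def matchingBlocks (U W : Finset V') (nT : V' → ℕ) : Finset (V' ⊕ (Σ _ : V', ℕ)) :=
  U.disjSum (W.sigma fun w => range (nT w))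

def cliqueBlock : AugV V' nP nT → Σ _ : V', ℕ
  | .inl x => ⟨x, 0⟩
  | .inr (.inl p) => ⟨p.1.1, p.1.2⟩
  | .inr (.inr q) => ⟨q.1.1, q.1.2.1⟩

def cliqueBlocks [DecidableEq V'] (U W : Finset V') (nP nT : V' → ℕ) :
    Finset (Σ _ : V', ℕ) :=
  U.sigma (fun u => range (nP u)) ∪ W.sigma fun w => range (max (nT w) 1)

def IsCanonicalIndep (W : Finset V') (nT : V' → ℕ) : AugV V' nP nT → Prop
  | .inl x => x ∈ W ∧ nT x = 0
  | .inr (.inl _) => True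
  | .inr (.inr q) => q.1.2.2 = false

lemma inl_mem_of_matchingBlock_eq_inl {u : V'} (hab : (AugGraph G' nP nT).Adj a a')
    (ha : matchingBlock a = .inl u) : .inl u ∈ s(a, a') := by
  rcases a with x | p | q <;> rcases a' with y | p' | q' <;>
    simp [matchingBlock] at hab ha ⊢ <;> grind

lemma exists_mem_mem_of_matchingBlock_eq_inr {t : Σ _ : V', ℕ}
    (hab : (AugGraph G' nP nT).Adj a a') (hbb : (AugGraph G' nP nT).Adj b b')
    (ha : matchingBlock a = .inr t) (hb : matchingBlock b = .inr t) :
    ∃ v, v ∈ s(a, a') ∧ v ∈ s(b, b') := by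
  rcases a with x | p | ⟨⟨w, i, β⟩, hq⟩ <;> rcases b with y | p' | ⟨⟨w₁, i₁, β₁⟩, hr⟩ <;>
    simp [matchingBlock] at ha hb
  -- Both edges lie in the triangle of `t`, and two edges of a triangle meet.
  subst ha
  simp only [Sigma.mk.injEq, heq_eq_eq] at hb
  obtain ⟨rfl, rfl⟩ := hb
  rcases a' with x | p | ⟨⟨w', i', β'⟩, hq'⟩ <;> rcases b' with y | p' | ⟨⟨w₂, i₂, β₂⟩, hr'⟩ <;>
    simp at hab hbb
  · exact ⟨.inl x, by simp, by simp [← hab, ← hbb]⟩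
  · refine ⟨.inr (.inr ⟨_, hq⟩), by simp, ?_⟩
    cases β <;> cases β₁ <;> simp_all
  · refine ⟨.inr (.inr ⟨_, hr⟩), ?_, by simp⟩
    cases β <;> cases β₁ <;> simp_all
  · refine ⟨.inr (.inr ⟨_, hr⟩), ?_, by simp⟩
    cases β <;> cases β₁ <;> simp_all

lemma exists_mem_mem_of_matchingBlock_eq (hab : (AugGraph G' nP nT).Adj a a')
    (hbb : (AugGraph G' nP nT).Adj b b') (hk : matchingBlock a = matchingBlock b) :
    ∃ v, v ∈ s(a, a') ∧ v ∈ s(b, b') := by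
  rcases hka : matchingBlock a with u | t
  · exact ⟨.inl u, inl_mem_of_matchingBlock_eq_inl hab hka,
      inl_mem_of_matchingBlock_eq_inl hbb (hk ▸ hka)⟩
  · exact exists_mem_mem_of_matchingBlock_eq_inr hab hbb hka (hk ▸ hka)

lemma exists_isCanonicalIndep_cliqueBlock_eq [DecidableEq V'] :
    ∀ t ∈ cliqueBlocks U W nP nT,
      ∃ v : AugV V' nP nT, IsCanonicalIndep W nT v ∧ cliqueBlock v = t := by
  rintro ⟨x, i⟩ ht
  simp only [cliqueBlocks, mem_union, mem_sigma, mem_range, lt_max_iff, Nat.lt_one_iff] at ht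
  rcases ht with ⟨-, hi⟩ | ⟨hx, hi | rfl⟩
  · exact ⟨.inr (.inl ⟨(x, i), hi⟩), trivial, rfl⟩
  · exact ⟨.inr (.inr ⟨(x, i, false), hi⟩), rfl, rfl⟩
  · by_cases h0 : nT x = 0
    · exact ⟨.inl x, ⟨hx, h0⟩, rfl⟩
    · exact ⟨.inr (.inr ⟨(x, 0, false), Nat.pos_of_ne_zero h0⟩), rfl, rfl⟩

lemma card_matchingBlocks : #(matchingBlocks U W nT) = #U + ∑ w ∈ W, nT w := by
  simp [matchingBlocks, card_sigma]

end AugGraph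

open AugGraph

section CameronWalker

variable {V' : Type*} {G' : SimpleGraph V'} {nP nT : V' → ℕ} {U W : Finset V'}
  {a b : AugV V' nP nT}

structure IsCameronWalker (G' : SimpleGraph V') (U W : Finset V') (nP nT : V' → ℕ) : Prop where
  mem_or_mem : ∀ x, x ∈ U ∨ x ∈ W
  not_mem_and_mem : ∀ x, ¬(x ∈ U ∧ x ∈ W)
  adj : ∀ a b, G'.Adj a b → (a ∈ U ∧ b ∈ W) ∨ (a ∈ W ∧ b ∈ U)
  one_le_nP : ∀ u ∈ U, 1 ≤ nP u
  nP_eq_zero : ∀ x ∉ U, nP x = 0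
  nT_eq_zero : ∀ x ∉ W, nT x = 0

namespace IsCameronWalker

lemma mem_left_of_lt_nP (h : IsCameronWalker G' U W nP nT) {x : V'} {i : ℕ} (hi : i < nP x) :
    x ∈ U := by
  by_contra hx
  simp [h.nP_eq_zero x hx] at hi

lemma mem_right_of_lt_nT (h : IsCameronWalker G' U W nP nT) {x : V'} {i : ℕ} (hi : i < nT x) :
    x ∈ W := by
  by_contra hx
  simp [h.nT_eq_zero x hx] at hi

lemma matchingBlock_mem_or_mem (h : IsCameronWalker G' U W nP nT)
    (hab : (AugGraph G' nP nT).Adj a b) :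
    matchingBlock a ∈ matchingBlocks U W nT ∨ matchingBlock b ∈ matchingBlocks U W nT := by
  rcases a with x | p | q <;> rcases b with y | p' | q' <;>
    simp [matchingBlock, matchingBlocks] at hab ⊢
  · rcases h.adj x y hab with ⟨hx, -⟩ | ⟨-, hy⟩
    exacts [.inl hx, .inr hy]
  · exact .inr (h.mem_left_of_lt_nP p'.2)
  · exact .inr ⟨h.mem_right_of_lt_nT q'.2, q'.2⟩
  · exact .inl (h.mem_left_of_lt_nP p.2)
  · exact .inl ⟨h.mem_right_of_lt_nT q.2, q.2⟩
  · exact .inl ⟨h.mem_right_of_lt_nT q.2, q.2⟩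

lemma exists_adj_matchingBlock_eq (h : IsCameronWalker G' U W nP nT) :
    ∀ t ∈ matchingBlocks U W nT, ∃ a b : AugV V' nP nT,
      (AugGraph G' nP nT).Adj a b ∧ matchingBlock a = t ∧ matchingBlock b = t := by
  rintro (u | ⟨w, i⟩) ht <;> simp [matchingBlocks] at ht
  · exact ⟨.inl u, .inr (.inl ⟨(u, 0), h.one_le_nP u ht⟩), by simp, rfl, rfl⟩
  · exact ⟨.inr (.inr ⟨(w, i, false), ht.2⟩), .inr (.inr ⟨(w, i, true), ht.2⟩), by simp, rfl, rfl⟩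

lemma matchingBlock_eq_of_adj (h : IsCameronWalker G' U W nP nT)
    (hab : (AugGraph G' nP nT).Adj a b) (ha : matchingBlock a ∈ matchingBlocks U W nT)
    (hb : matchingBlock b ∈ matchingBlocks U W nT) : matchingBlock a = matchingBlock b := by
  rcases a with x | p | q <;> rcases b with y | p' | q' <;>
    simp [matchingBlock, matchingBlocks] at hab ha hb ⊢
  · exfalso
    rcases h.adj x y hab with ⟨-, hy⟩ | ⟨hx, -⟩
    exacts [h.not_mem_and_mem y ⟨hb, hy⟩, h.not_mem_and_mem x ⟨ha, hx⟩]
  · exact hab.symm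
  · exact h.not_mem_and_mem x ⟨ha, hab ▸ hb.1⟩
  · exact hab
  · exact h.not_mem_and_mem y ⟨hb, hab ▸ ha.1⟩
  · exact ⟨hab.1, hab.2.1⟩

lemma cliqueBlock_mem [DecidableEq V'] (h : IsCameronWalker G' U W nP nT) (v : AugV V' nP nT) :
    cliqueBlock v ∈ cliqueBlocks U W nP nT := by
  rcases v with x | p | q <;> simp [cliqueBlock, cliqueBlocks]
  · rcases h.mem_or_mem x with hx | hx
    exacts [.inl ⟨hx, h.one_le_nP x hx⟩, .inr hx]
  · exact .inl ⟨h.mem_left_of_lt_nP p.2, p.2⟩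
  · exact .inr ⟨h.mem_right_of_lt_nT q.2, .inl q.2⟩

lemma adj_of_cliqueBlock_eq (h : IsCameronWalker G' U W nP nT) (hne : a ≠ b)
    (hab : cliqueBlock a = cliqueBlock b) : (AugGraph G' nP nT).Adj a b := by
  rcases a with x | p | q <;> rcases b with y | p' | q' <;>
    simp [cliqueBlock] at hab hne ⊢
  · exact absurd hab hne
  · exact hab.1.symm
  · exact hab.1.symm
  · exact hab.1
  · exact hne (Subtype.ext (Prod.ext hab.1 hab.2))
  · exact h.not_mem_and_mem _ ⟨h.mem_left_of_lt_nP p.2, hab.1 ▸ h.mem_right_of_lt_nT q'.2⟩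
  · exact hab.1
  · exact h.not_mem_and_mem _ ⟨h.mem_left_of_lt_nP p'.2, hab.1 ▸ h.mem_right_of_lt_nT q.2⟩
  · exact ⟨hab.1, hab.2, fun hb => hne (Subtype.ext (Prod.ext hab.1 (Prod.ext hab.2 hb)))⟩

lemma not_adj_of_isCanonicalIndep (h : IsCameronWalker G' U W nP nT)
    (ha : IsCanonicalIndep W nT a) (hb : IsCanonicalIndep W nT b) :
    ¬ (AugGraph G' nP nT).Adj a b := by
  rcases a with x | p | q <;> rcases b with y | p' | q' <;>
    simp [IsCanonicalIndep] at ha hb ⊢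
  · intro hxy
    rcases h.adj x y hxy with ⟨hx, -⟩ | ⟨-, hy⟩
    exacts [h.not_mem_and_mem x ⟨hx, ha.1⟩, h.not_mem_and_mem y ⟨hy, hb.1⟩]
  · rintro rfl
    exact h.not_mem_and_mem _ ⟨h.mem_left_of_lt_nP p'.2, ha.1⟩
  · rintro rfl
    exact absurd q'.2 (by simp [ha.2])
  · rintro rfl
    exact h.not_mem_and_mem _ ⟨h.mem_left_of_lt_nP p.2, hb.1⟩
  · rintro rfl
    exact absurd q.2 (by simp [hb.2])
  · exact fun _ _ => ha.trans hb.symm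

lemma card_cliqueBlocks [DecidableEq V'] (h : IsCameronWalker G' U W nP nT) :
    #(cliqueBlocks U W nP nT) = ∑ u ∈ U, nP u + ∑ w ∈ W, max (nT w) 1 := by
  rw [cliqueBlocks, card_union_of_disjoint]
  · simp [card_sigma]
  · refine disjoint_left.mpr fun t htU htW => h.not_mem_and_mem t.1 ?_
    simp only [mem_sigma] at htU htW
    exact ⟨htU.1, htW.1⟩

theorem MMn_eq_and_IMn_eq (h : IsCameronWalker G' U W nP nT) :
    MMn (AugGraph G' nP nT) = #U + ∑ w ∈ W, nT w ∧
      IMn (AugGraph G' nP nT) = #U + ∑ w ∈ W, nT w := by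
  rw [← card_matchingBlocks]
  exact MMn_eq_card_and_IMn_eq_card_of_blocks matchingBlock _
    (fun _ _ => h.matchingBlock_mem_or_mem) (fun _ _ _ _ => exists_mem_mem_of_matchingBlock_eq)
    h.exists_adj_matchingBlock_eq (fun _ _ => h.matchingBlock_eq_of_adj)

theorem ISn_eq [DecidableEq V'] (h : IsCameronWalker G' U W nP nT) :
    ISn (AugGraph G' nP nT) = ∑ u ∈ U, nP u + ∑ w ∈ W, max (nT w) 1 := by
  rw [← h.card_cliqueBlocks]
  exact ISn_eq_card_of_blocks cliqueBlock _ h.cliqueBlock_mem (fun _ _ => h.adj_of_cliqueBlock_eq)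
    (IsCanonicalIndep W nT) (fun _ _ => h.not_adj_of_isCanonicalIndep)
    exists_isCanonicalIndep_cliqueBlock_eq

end IsCameronWalker

end CameronWalker

theorem stmt_15_general {V' : Type*} [DecidableEq V'] (G' : SimpleGraph V')
    (U W : Finset V') (nP nT : V' → ℕ)
    (hpart : ∀ x : V', x ∈ U ∨ x ∈ W) (hdisj : ∀ x : V', ¬(x ∈ U ∧ x ∈ W))
    (hbip : ∀ a b : V', G'.Adj a b → (a ∈ U ∧ b ∈ W) ∨ (a ∈ W ∧ b ∈ U))
    (hnP : ∀ u ∈ U, 1 ≤ nP u) (hnP0 : ∀ x ∉ U, nP x = 0)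
    (hnT0 : ∀ x ∉ W, nT x = 0) :
    MMn (AugGraph G' nP nT) = U.card + ∑ w ∈ W, nT w ∧
    IMn (AugGraph G' nP nT) = U.card + ∑ w ∈ W, nT w ∧
    ISn (AugGraph G' nP nT) = ∑ u ∈ U, nP u + ∑ w ∈ W, max (nT w) 1 := by
  have h : IsCameronWalker G' U W nP nT := ⟨hpart, hdisj, hbip, hnP, hnP0, hnT0⟩
  exact ⟨h.MMn_eq_and_IMn_eq.1, h.MMn_eq_and_IMn_eq.2, h.ISn_eq⟩

theorem stmt_15 {V' : Type*} [Fintype V'] [DecidableEq V'] (G' : SimpleGraph V')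
    (U W : Finset V') (nP nT : V' → ℕ)
    (hpart : ∀ x : V', x ∈ U ∨ x ∈ W) (hdisj : ∀ x : V', ¬(x ∈ U ∧ x ∈ W))
    (hU : U.Nonempty) (hW : W.Nonempty)
    (hbip : ∀ a b : V', G'.Adj a b → (a ∈ U ∧ b ∈ W) ∨ (a ∈ W ∧ b ∈ U))
    (hconn : G'.Connected)
    (hnP : ∀ u ∈ U, 1 ≤ nP u) (hnP0 : ∀ x ∉ U, nP x = 0)
    (hnT0 : ∀ x ∉ W, nT x = 0) :
    MMn (AugGraph G' nP nT) = U.card + ∑ w ∈ W, nT w ∧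
    IMn (AugGraph G' nP nT) = U.card + ∑ w ∈ W, nT w ∧
    ISn (AugGraph G' nP nT) = ∑ u ∈ U, nP u + ∑ w ∈ W, max (nT w) 1 :=
  stmt_15_general G' U W nP nT hpart hdisj hbip hnP hnP0 hnT0
end

section
/- Let G be a graph, let u, v be adjacent vertices with N({u,v}) ≠ ∅, and let ℓ ∈ ℕ. Then G has an induced matching of size ℓ if and only if at least one of G − u, G − v, or G − N({u,v}) has an induced matching of size ℓ. -/
variable {V : Type*}

lemma transfer (G : SimpleGraph V) (S : Set V) (hS : S.Nonempty) (ℓ : ℕ) :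
    (∃ M : Finset (Sym2 S), IsInducedMatchingSet (G.induce S) M ∧ M.card = ℓ) ↔
    ∃ M : Finset (Sym2 V), IsInducedMatchingSet G M ∧ M.card = ℓ ∧
      ∀ e ∈ M, ∀ x ∈ e, x ∈ S := by
  classical
  have hval : Function.Injective (Subtype.val : S → V) := Subtype.val_injective
  constructor
  · rintro ⟨M, ⟨⟨hE, hM⟩, hI⟩, hcard⟩
    refine ⟨M.map ⟨Sym2.map Subtype.val, Sym2.map.injective hval⟩, ⟨⟨?_, ?_⟩, ?_⟩, ?_, ?_⟩
    · intro e he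
      rw [Finset.mem_map] at he
      obtain ⟨e', he', rfl⟩ := he
      induction e' using Sym2.ind with
      | _ a b => simpa using hE _ he'
    · intro e he f hf hef x hxe hxf
      rw [Finset.mem_map] at he hf
      obtain ⟨e', he', rfl⟩ := he
      obtain ⟨f', hf', rfl⟩ := hf
      simp only [Function.Embedding.coeFn_mk] at hxe hxf
      obtain ⟨y, hy, rfl⟩ := Sym2.mem_map.1 hxe
      obtain ⟨z, hz, hzy⟩ := Sym2.mem_map.1 hxf
      have hef' : e' ≠ f' := fun h => hef (by rw [h])
      exact hM e' he' f' hf' hef' y hy (by rwa [hval hzy] at hz)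
    · intro e he f hf hef a ha b hb hadj
      rw [Finset.mem_map] at he hf
      obtain ⟨e', he', rfl⟩ := he
      obtain ⟨f', hf', rfl⟩ := hf
      simp only [Function.Embedding.coeFn_mk] at ha hb
      obtain ⟨y, hy, rfl⟩ := Sym2.mem_map.1 ha
      obtain ⟨z, hz, rfl⟩ := Sym2.mem_map.1 hb
      have hef' : e' ≠ f' := fun h => hef (by rw [h])
      exact hI e' he' f' hf' hef' y hy z hz (by simpa using hadj)
    · simp [hcard]
    · intro e he x hx
      rw [Finset.mem_map] at he
      obtain ⟨e', he', rfl⟩ := he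
      simp only [Function.Embedding.coeFn_mk] at hx
      obtain ⟨y, hy, rfl⟩ := Sym2.mem_map.1 hx
      exact y.2
  · rintro ⟨M, ⟨⟨hE, hM⟩, hI⟩, hcard, hsub⟩
    set g : V → S := fun x => if h : x ∈ S then ⟨x, h⟩ else ⟨hS.choose, hS.choose_spec⟩ with hg
    have hgval : ∀ x ∈ S, ((g x : S) : V) = x := fun x hx => by simp [hg, hx]
    have key : ∀ e ∈ M, Sym2.map (Subtype.val) (Sym2.map g e) = e := by
      intro e he
      rw [Sym2.map_map]
      have : Sym2.map (Subtype.val ∘ g) e = Sym2.map id e :=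
        Sym2.map_congr (fun x hx => hgval x (hsub e he x hx))
      rw [this, Sym2.map_id]
      rfl
    have hmemval : ∀ e ∈ M, ∀ x : S, x ∈ Sym2.map g e → (x : V) ∈ e := by
      intro e he x hx
      obtain ⟨y, hy, rfl⟩ := Sym2.mem_map.1 hx
      rwa [hgval y (hsub e he y hy)]
    refine ⟨M.image (Sym2.map g), ⟨⟨?_, ?_⟩, ?_⟩, ?_⟩
    · intro e he
      rw [Finset.mem_image] at he
      obtain ⟨e', he', rfl⟩ := he
      induction e' using Sym2.ind with
      | _ a b =>
        have hadj : G.Adj a b := hE _ he'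
        have ha : a ∈ S := hsub _ he' a (by simp)
        have hb : b ∈ S := hsub _ he' b (by simp)
        simp only [Sym2.map_pair_eq, SimpleGraph.mem_edgeSet, SimpleGraph.comap_adj,
          Function.Embedding.coe_subtype, SimpleGraph.induce]
        rw [hgval a ha, hgval b hb]
        exact hadj
    · intro e he f hf hef x hxe hxf
      rw [Finset.mem_image] at he hf
      obtain ⟨e', he', rfl⟩ := he
      obtain ⟨f', hf', rfl⟩ := hf
      have hef' : e' ≠ f' := fun h => hef (by rw [h])
      exact hM e' he' f' hf' hef' x (hmemval e' he' x hxe) (hmemval f' hf' x hxf)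
    · intro e he f hf hef a ha b hb hadj
      rw [Finset.mem_image] at he hf
      obtain ⟨e', he', rfl⟩ := he
      obtain ⟨f', hf', rfl⟩ := hf
      have hef' : e' ≠ f' := fun h => hef (by rw [h])
      refine hI e' he' f' hf' hef' a (hmemval e' he' a ha) b (hmemval f' hf' b hb) ?_
      exact hadj
    · rw [Finset.card_image_of_injOn, hcard]
      intro e he f hf h
      rw [← key e he, ← key f hf, h]

/-- Branching rule on two adjacent vertices `u, v` with `N({u,v}) ≠ ∅`:
`G` has an induced matching of size `ℓ` iff one of `G - u`, `G - v`, or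
`G - N({u,v})` does. -/
theorem stmt_19 {V : Type*} [Fintype V] (G : SimpleGraph V) (u v : V)
    (huv : G.Adj u v)
    (hN : ((G.neighborSet u ∪ G.neighborSet v) \ {u, v} : Set V).Nonempty) (ℓ : ℕ) :
    (∃ M : Finset (Sym2 V), IsInducedMatchingSet G M ∧ M.card = ℓ) ↔
    ((∃ M : Finset (Sym2 ({x : V | x ≠ u} : Set V)),
        IsInducedMatchingSet (G.induce {x : V | x ≠ u}) M ∧ M.card = ℓ) ∨
     (∃ M : Finset (Sym2 ({x : V | x ≠ v} : Set V)),
        IsInducedMatchingSet (G.induce {x : V | x ≠ v}) M ∧ M.card = ℓ) ∨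
     (∃ M : Finset (Sym2 (((G.neighborSet u ∪ G.neighborSet v) \ {u, v})ᶜ : Set V)),
        IsInducedMatchingSet
          (G.induce (((G.neighborSet u ∪ G.neighborSet v) \ {u, v})ᶜ : Set V)) M ∧
        M.card = ℓ)) := by
  rw [transfer G {x : V | x ≠ u} ⟨v, huv.ne'⟩ ℓ,
      transfer G {x : V | x ≠ v} ⟨u, huv.ne⟩ ℓ,
      transfer G (((G.neighborSet u ∪ G.neighborSet v) \ {u, v})ᶜ) ⟨u, by simp⟩ ℓ]
  constructor
  · rintro ⟨M, hM, hcard⟩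
    by_cases hu : ∀ e ∈ M, u ∉ e
    · exact Or.inl ⟨M, hM, hcard, fun e he x hx h => hu e he (h ▸ hx)⟩
    · push_neg at hu
      obtain ⟨e, he, hue⟩ := hu
      by_cases hv : ∀ f ∈ M, v ∉ f
      · exact Or.inr (Or.inl ⟨M, hM, hcard, fun e he x hx h => hv e he (h ▸ hx)⟩)
      · push_neg at hv
        obtain ⟨f, hf, hvf⟩ := hv
        have hef : e = f := by
          by_contra hne
          exact hM.2 e he f hf hne u hue v hvf huv
        subst hef
        have heuv : e = s(u, v) := (Sym2.mem_and_mem_iff huv.ne).1 ⟨hue, hvf⟩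
        refine Or.inr (Or.inr ⟨M, hM, hcard, ?_⟩)
        intro f' hf' x hx
        simp only [Set.mem_compl_iff, Set.mem_diff, Set.mem_union,
          SimpleGraph.mem_neighborSet, Set.mem_insert_iff, Set.mem_singleton_iff]
        by_cases hfe : f' = e
        · subst hfe
          rw [heuv] at hx
          rcases Sym2.mem_iff.1 hx with rfl | rfl
          · rintro ⟨-, hx2⟩; exact hx2 (Or.inl rfl)
          · rintro ⟨-, hx2⟩; exact hx2 (Or.inr rfl)
        · have hI := hM.2 e he f' hf' (fun h => hfe h.symm)
          rintro ⟨h1 | h2, -⟩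
          · exact hI u hue x hx h1
          · exact hI v hvf x hx h2
  · rintro (⟨M, h, hc, -⟩ | ⟨M, h, hc, -⟩ | ⟨M, h, hc, -⟩) <;> exact ⟨M, h, hc⟩
end
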